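/- One-step identity for quasi-Newton with stepsize 1/2: let K ∈ S with value matrix X such that P := R + Bᵀ X B is invertible, and set K' = K − P^{-1} N where N = RK − Bᵀ X A_K. If K' ∈ S with value matrix X', then X − X' = A_{K'}ᵀ (X − X') A_{K'} + Nᵀ P^{-1} N; in particular if P ≻ 0 then X ⪰ X'. -/

import Mathlib

/-!
Expanding both Lyapunov equations around `A_{K'}` gives
`X - X' = A_{K'}ᵀ (X - X') A_{K'} + ΔᵀN + NᵀΔ - ΔᵀPΔ` with `Δ = K - K'`, and the step
`Δ = P⁻¹N` completes the square, leaving `NᵀP⁻¹N`. If `P ≻ 0` this term is positive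
semidefinite, so the quadratic form of `X - X'` can only decrease along orbits of the Schur
stable matrix `A_{K'}`; these orbits tend to `0` by Gelfand's formula, so the form is nonnegative.
-/

open Matrix
open scoped ENNReal

/-- Spectral radius of a real square matrix, computed over ℂ. -/
noncomputable def specRad {n : ℕ} (A : Matrix (Fin n) (Fin n) ℝ) : ℝ≥0∞ :=
  spectralRadius ℂ (A.map Complex.ofReal)

/-- A real square matrix is Schur stable if its spectral radius is `< 1`. -/
def IsSchur {n : ℕ} (A : Matrix (Fin n) (Fin n) ℝ) : Prop := specRad A < 1

open Filter Topology

theorem tendsto_pow_atTop_nhds_zero_of_spectralRadius_lt_one {A : Type*} [NormedRing A]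
    [NormedAlgebra ℂ A] [CompleteSpace A] {a : A} (h : spectralRadius ℂ a < 1) :
    Tendsto (a ^ ·) atTop (𝓝 0) := by
  obtain ⟨r, hρr, hr1⟩ := ENNReal.lt_iff_exists_nnreal_btwn.mp h
  have hroot : ∀ᶠ k : ℕ in atTop, ‖a ^ k‖ ^ (1 / k : ℝ) < r := by
    have hgelfand := spectrum.pow_norm_pow_one_div_tendsto_nhds_spectralRadius a
    filter_upwards [hgelfand.eventually_lt_const hρr] with k hk
    exact (ENNReal.ofReal_lt_iff_lt_toReal (by positivity) ENNReal.coe_ne_top).mp hk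
  have hbound : ∀ᶠ k : ℕ in atTop, ‖a ^ k‖ ≤ (r : ℝ) ^ k := by
    filter_upwards [hroot, eventually_ne_atTop 0] with k hk hk0
    rw [one_div] at hk
    calc ‖a ^ k‖ = (‖a ^ k‖ ^ (k⁻¹ : ℝ)) ^ k :=
          (Real.rpow_inv_natCast_pow (norm_nonneg _) hk0).symm
      _ ≤ (r : ℝ) ^ k := by gcongr
  exact squeeze_zero_norm' hbound
    (tendsto_pow_atTop_nhds_zero_of_lt_one r.coe_nonneg (by exact_mod_cast hr1))

theorem IsSchur.tendsto_pow {n : ℕ} {M : Matrix (Fin n) (Fin n) ℝ} (hM : IsSchur M) :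
    Tendsto (M ^ ·) atTop (𝓝 0) := by
  -- Any Banach algebra norm will do; this one induces the usual (entrywise) topology.
  let _ := Matrix.linftyOpNormedRing (n := Fin n) (α := ℂ)
  let _ := Matrix.linftyOpNormedAlgebra (n := Fin n) (R := ℂ) (α := ℂ)
  have hc := tendsto_pow_atTop_nhds_zero_of_spectralRadius_lt_one (a := M.map Complex.ofReal) hM
  have hre : Continuous fun C : Matrix (Fin n) (Fin n) ℂ => C.map Complex.re :=
    continuous_id.matrix_map Complex.continuous_re
  convert (hre.tendsto 0).comp hc using 1
  · ext k : 1
    have : M.map Complex.ofReal ^ k = (M ^ k).map Complex.ofReal :=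
      (map_pow Complex.ofRealHom.mapMatrix M k).symm
    simp [this, Matrix.map_map, Function.comp_def]
  · simp

theorem IsSchur.posSemidef_of_lyapunov {n : ℕ} {M S C : Matrix (Fin n) (Fin n) ℝ}
    (hM : IsSchur M) (hS : S.IsSymm) (hC : C.PosSemidef) (hSC : S = Mᵀ * S * M + C) :
    S.PosSemidef := by
  refine .of_dotProduct_mulVec_nonneg (isHermitian_iff_isSymm.mpr hS) fun v => ?_
  let q : (Fin n → ℝ) → ℝ := fun u => u ⬝ᵥ (S *ᵥ u)
  have hstep : ∀ u, q (M *ᵥ u) ≤ q u := fun u => by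
    have hCu := hC.dotProduct_mulVec_nonneg u
    have : q u = q (M *ᵥ u) + u ⬝ᵥ (C *ᵥ u) := by
      simp only [q]
      conv_lhs => rw [hSC]
      rw [add_mulVec, dotProduct_add, ← mulVec_mulVec, ← mulVec_mulVec, dotProduct_mulVec,
        vecMul_transpose]
    simp only [star_trivial] at hCu
    linarith
  have hanti : Antitone fun k => q ((M ^ k) *ᵥ v) :=
    antitone_nat_of_succ_le fun k => by
      simpa only [pow_succ', ← mulVec_mulVec] using hstep ((M ^ k) *ᵥ v)
  have hq : Continuous q := by simp only [q, dotProduct, mulVec]; fun_prop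
  have hlim : Tendsto (fun k => q ((M ^ k) *ᵥ v)) atTop (𝓝 0) := by
    have hmulVec : Tendsto (fun A : Matrix (Fin n) (Fin n) ℝ => A *ᵥ v) (𝓝 0) (𝓝 0) :=
      (continuous_id.matrix_mulVec continuous_const).tendsto' 0 0 (zero_mulVec v)
    have hq0 : Tendsto q (𝓝 0) (𝓝 0) := hq.tendsto' 0 0 (by simp [q])
    exact hq0.comp (hmulVec.comp hM.tendsto_pow)
  simpa [q] using le_of_tendsto' hlim fun k => hanti (Nat.zero_le k)

section Lyapunov

variable {α ι κ : Type*} [CommRing α] [Fintype κ]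

theorem lyapunov_sub_lyapunov [Fintype ι] {A Q X X' : Matrix ι ι α} {B : Matrix ι κ α}
    {R : Matrix κ κ α} {K K' N : Matrix κ ι α} (hR : R.IsSymm) (hX : X.IsSymm)
    (hLyap : (A - B * K)ᵀ * X * (A - B * K) + Q + Kᵀ * R * K = X)
    (hLyap' : (A - B * K')ᵀ * X' * (A - B * K') + Q + K'ᵀ * R * K' = X')
    (hN : N = R * K - Bᵀ * X * (A - B * K)) :
    X - X' = (A - B * K')ᵀ * (X - X') * (A - B * K')
      + ((K - K')ᵀ * N + Nᵀ * (K - K') - (K - K')ᵀ * (R + Bᵀ * X * B) * (K - K')) := by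
  nth_rewrite 1 [← hLyap]
  nth_rewrite 1 [← hLyap']
  subst hN
  simp only [sub_eq_add_neg, transpose_add, transpose_neg, transpose_mul, hR.eq, hX.eq,
    transpose_transpose, Matrix.add_mul, Matrix.mul_add, Matrix.neg_mul, Matrix.mul_neg, neg_add,
    neg_neg, Matrix.mul_assoc]
  abel

theorem Matrix.IsSymm.cross_sub_quadratic_inv_mul [DecidableEq κ] {P : Matrix κ κ α}
    (hP : P.IsSymm) (hPu : IsUnit P) (N : Matrix κ ι α) :
    (P⁻¹ * N)ᵀ * N + Nᵀ * (P⁻¹ * N) - (P⁻¹ * N)ᵀ * P * (P⁻¹ * N) = Nᵀ * P⁻¹ * N := by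
  have hPinv : (P⁻¹)ᵀ = P⁻¹ := by rw [transpose_nonsing_inv, hP.eq]
  rw [Matrix.mul_assoc _ P, ← Matrix.mul_assoc P,
    mul_nonsing_inv _ ((isUnit_iff_isUnit_det P).mp hPu), Matrix.one_mul, transpose_mul, hPinv,
    Matrix.mul_assoc, add_sub_cancel_right]

end Lyapunov

theorem stmt15_general {n m : ℕ} (A : Matrix (Fin n) (Fin n) ℝ) (B : Matrix (Fin n) (Fin m) ℝ)
    (Q : Matrix (Fin n) (Fin n) ℝ) (R : Matrix (Fin m) (Fin m) ℝ)
    (hR : Rᵀ = R)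
    (K : Matrix (Fin m) (Fin n) ℝ) (X : Matrix (Fin n) (Fin n) ℝ)
    (hX : Xᵀ = X)
    (hLyap : (A - B * K)ᵀ * X * (A - B * K) + Q + Kᵀ * R * K = X)
    (N : Matrix (Fin m) (Fin n) ℝ) (hN : N = R * K - Bᵀ * X * (A - B * K))
    (hP : IsUnit (R + Bᵀ * X * B))
    (K' : Matrix (Fin m) (Fin n) ℝ) (hK' : K' = K - (R + Bᵀ * X * B)⁻¹ * N)
    (X' : Matrix (Fin n) (Fin n) ℝ)
    (hX' : X'ᵀ = X') (hS' : IsSchur (A - B * K'))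
    (hLyap' : (A - B * K')ᵀ * X' * (A - B * K') + Q + K'ᵀ * R * K' = X') :
    X - X' = (A - B * K')ᵀ * (X - X') * (A - B * K')
        + Nᵀ * (R + Bᵀ * X * B)⁻¹ * N ∧
    ((R + Bᵀ * X * B).PosDef → (X - X').PosSemidef) := by
  have hPsymm : (R + Bᵀ * X * B).IsSymm := by
    simp [IsSymm, transpose_mul, hR, hX, Matrix.mul_assoc]
  have hstep : K - K' = (R + Bᵀ * X * B)⁻¹ * N := by rw [hK', sub_sub_cancel]
  have hident : X - X' = (A - B * K')ᵀ * (X - X') * (A - B * K')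
      + Nᵀ * (R + Bᵀ * X * B)⁻¹ * N := by
    rw [← hPsymm.cross_sub_quadratic_inv_mul hP, ← hstep]
    exact lyapunov_sub_lyapunov hR hX hLyap hLyap' hN
  refine ⟨hident, fun hPpos => ?_⟩
  have hgain : (Nᵀ * (R + Bᵀ * X * B)⁻¹ * N).PosSemidef := by
    simpa using hPpos.inv.posSemidef.conjTranspose_mul_mul_same N
  exact hS'.posSemidef_of_lyapunov (by simp [IsSymm, hX, hX']) hgain hident

/-- One-step identity for the quasi-Newton update with stepsize `1/2`:
`K' = K − P⁻¹N` with `P = R + BᵀXB`, giving `X − X' = A_K'ᵀ(X − X')A_K' + NᵀP⁻¹N`;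
in particular `X ⪰ X'` when `P ≻ 0`. -/
theorem stmt15 {n m : ℕ} (A : Matrix (Fin n) (Fin n) ℝ) (B : Matrix (Fin n) (Fin m) ℝ)
    (Q : Matrix (Fin n) (Fin n) ℝ) (R : Matrix (Fin m) (Fin m) ℝ)
    (hQ : Qᵀ = Q) (hR : Rᵀ = R)
    (K : Matrix (Fin m) (Fin n) ℝ) (X : Matrix (Fin n) (Fin n) ℝ)
    (hX : Xᵀ = X) (hS : IsSchur (A - B * K))
    (hLyap : (A - B * K)ᵀ * X * (A - B * K) + Q + Kᵀ * R * K = X)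
    (N : Matrix (Fin m) (Fin n) ℝ) (hN : N = R * K - Bᵀ * X * (A - B * K))
    (hP : IsUnit (R + Bᵀ * X * B))
    (K' : Matrix (Fin m) (Fin n) ℝ) (hK' : K' = K - (R + Bᵀ * X * B)⁻¹ * N)
    (X' : Matrix (Fin n) (Fin n) ℝ)
    (hX' : X'ᵀ = X') (hS' : IsSchur (A - B * K'))
    (hLyap' : (A - B * K')ᵀ * X' * (A - B * K') + Q + K'ᵀ * R * K' = X') :
    X - X' = (A - B * K')ᵀ * (X - X') * (A - B * K')
        + Nᵀ * (R + Bᵀ * X * B)⁻¹ * N ∧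
    ((R + Bᵀ * X * B).PosDef → (X - X').PosSemidef) :=
  stmt15_general A B Q R hR K X hX hLyap N hN hP K' hK' X' hX' hS' hLyap'
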